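/- For the function F of the conformal minimal surface equation, the second derivative ∂²_z F(x', 0, 0, 0) = ((n−1)/(2c(x',0))) ∂³_{x_n} c(x', 0) under the assumptions ∂_{x_n} c(x', 0) = 0 and ∂²_{x_n} c(x', 0) = 0. -/

import Mathlib

noncomputable def pd {n : ℕ} (i : Fin n) (f : (Fin n → ℝ) → ℝ) (x : Fin n → ℝ) : ℝ :=
  fderiv ℝ f x (Pi.single i 1)

noncomputable def kdelta {n : ℕ} (i j : Fin n) : ℝ := if i = j then 1 else 0

/-- The function `F` of the conformal minimal surface equation on `(ℝ^{m+1}, c δ)`: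
`F(x',z,p,P) = −∑ Pᵢᵢ − (m/(2c(x',z)))(∑ pᵢ ∂ᵢc(x',z) − ∂ₙc(x',z))
  + (1/(1+|p|²)) ∑ Pᵢⱼ pᵢ pⱼ`. -/
noncomputable def msF {m : ℕ} (c : (Fin (m + 1) → ℝ) → ℝ)
    (x' : Fin m → ℝ) (z : ℝ) (p : Fin m → ℝ) (P : Matrix (Fin m) (Fin m) ℝ) : ℝ :=
  -(∑ i, P i i)
  - ((m : ℝ) / (2 * c (Fin.snoc x' z))) *
      ((∑ i, p i * pd (Fin.castSucc i) c (Fin.snoc x' z)) - pd (Fin.last m) c (Fin.snoc x' z))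
  + (1 / (1 + ∑ i, (p i) ^ 2)) * ∑ i, ∑ j, P i j * p i * p j

lemma pd_contDiff {n : ℕ} (i : Fin n) (f : (Fin n → ℝ) → ℝ) (hf : ContDiff ℝ (⊤ : ℕ∞) f) :
    ContDiff ℝ (⊤ : ℕ∞) (pd i f) :=
  (hf.fderiv_right (by simp)).clm_apply contDiff_const

lemma hasDerivAt_snoc {m : ℕ} (f : (Fin (m+1) → ℝ) → ℝ) (hf : Differentiable ℝ f)
    (x' : Fin m → ℝ) (t : ℝ) :
    HasDerivAt (fun s => f (Fin.snoc x' s)) (pd (Fin.last m) f (Fin.snoc x' t)) t := by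
  have hL : ∀ s : ℝ, Fin.snoc x' s = (Fin.snoc x' 0 + s • (Pi.single (Fin.last m) 1 : Fin (m+1) → ℝ)) := by
    intro s; funext i
    refine Fin.lastCases ?_ ?_ i
    · simp
    · intro j
      simp [Pi.single_eq_of_ne (Fin.castSucc_lt_last j).ne]
  have hLd : HasDerivAt (fun s : ℝ => Fin.snoc x' 0 + s • (Pi.single (Fin.last m) 1 : Fin (m+1) → ℝ))
      ((Pi.single (Fin.last m) 1 : Fin (m+1) → ℝ)) t := by
    simpa using ((hasDerivAt_id t).smul_const ((Pi.single (Fin.last m) 1 : Fin (m+1) → ℝ))).const_add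
      (Fin.snoc x' 0 : Fin (m+1) → ℝ)
  have h := (hf _).hasFDerivAt.comp_hasDerivAt t hLd
  simp only [← hL] at h
  exact h

/-- Under `∂ₙc(x',0) = 0` and `∂ₙ²c(x',0) = 0`,
`∂²_z F(x',0,0,0) = ((n−1)/(2c(x',0))) ∂ₙ³c(x',0)` with `n − 1 = m`. -/
theorem stmt9 {m : ℕ} (hm : 3 ≤ m + 1)
    (c : (Fin (m + 1) → ℝ) → ℝ) (hc : ContDiff ℝ (⊤ : ℕ∞) c) (hpos : ∀ x, 0 < c x)
    (x' : Fin m → ℝ)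
    (h1 : pd (Fin.last m) c (Fin.snoc x' 0) = 0)
    (h2 : pd (Fin.last m) (pd (Fin.last m) c) (Fin.snoc x' 0) = 0) :
    deriv (deriv (fun t => msF c x' t 0 0)) 0
      = ((m : ℝ) / (2 * c (Fin.snoc x' 0))) *
          pd (Fin.last m) (pd (Fin.last m) (pd (Fin.last m) c)) (Fin.snoc x' 0) := by
  set g : ℝ → ℝ := fun t => c (Fin.snoc x' t) with hg
  set g1 : ℝ → ℝ := fun t => pd (Fin.last m) c (Fin.snoc x' t) with hg1
  set g2 : ℝ → ℝ := fun t => pd (Fin.last m) (pd (Fin.last m) c) (Fin.snoc x' t) with hg2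
  set g3 : ℝ → ℝ := fun t =>
    pd (Fin.last m) (pd (Fin.last m) (pd (Fin.last m) c)) (Fin.snoc x' t) with hg3
  have hc1 : ContDiff ℝ (⊤ : ℕ∞) (pd (Fin.last m) c) := pd_contDiff _ _ hc
  have hc2 : ContDiff ℝ (⊤ : ℕ∞) (pd (Fin.last m) (pd (Fin.last m) c)) := pd_contDiff _ _ hc1
  have Hg : ∀ t, HasDerivAt g (g1 t) t := fun t =>
    hasDerivAt_snoc c (hc.differentiable (by simp)) x' t
  have Hg1 : ∀ t, HasDerivAt g1 (g2 t) t := fun t =>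
    hasDerivAt_snoc _ (hc1.differentiable (by simp)) x' t
  have Hg2 : ∀ t, HasDerivAt g2 (g3 t) t := fun t =>
    hasDerivAt_snoc _ (hc2.differentiable (by simp)) x' t
  have hgne : ∀ t, g t ≠ 0 := fun t => (hpos _).ne'
  have key : (fun t => msF c x' t 0 0) = fun t => ((m : ℝ) / 2) * (g1 t / g t) := by
    funext t
    simp only [msF, Matrix.zero_apply, Pi.zero_apply, zero_mul, Finset.sum_const_zero,
      mul_zero, hg1, hg]
    field_simp
    ring
  rw [key]
  have Hh : ∀ t, HasDerivAt (fun t => ((m : ℝ) / 2) * (g1 t / g t))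
      (((m : ℝ) / 2) * ((g2 t * g t - g1 t * g1 t) / (g t) ^ 2)) t := fun t =>
    (((Hg1 t).div (Hg t) (hgne t))).const_mul _
  have hderiv1 : deriv (fun t => ((m : ℝ) / 2) * (g1 t / g t))
      = fun t => ((m : ℝ) / 2) * ((g2 t * g t - g1 t * g1 t) / (g t) ^ 2) := by
    funext t; exact (Hh t).deriv
  rw [hderiv1]
  have HN : HasDerivAt (fun t => g2 t * g t - g1 t * g1 t)
      (g3 0 * g 0 + g2 0 * g1 0 - (g2 0 * g1 0 + g1 0 * g2 0)) 0 :=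
    ((Hg2 0).mul (Hg 0)).sub ((Hg1 0).mul (Hg1 0))
  have HD : HasDerivAt (fun t => (g t) ^ 2) (2 * (g 0) ^ 1 * g1 0) 0 := by
    exact ((Hg 0).pow 2).congr_deriv (by norm_num)
  have H2 : HasDerivAt (fun t => ((m : ℝ) / 2) * ((g2 t * g t - g1 t * g1 t) / (g t) ^ 2))
      (((m : ℝ) / 2) * (((g3 0 * g 0 + g2 0 * g1 0 - (g2 0 * g1 0 + g1 0 * g2 0)) * (g 0) ^ 2
        - (g2 0 * g 0 - g1 0 * g1 0) * (2 * (g 0) ^ 1 * g1 0)) / ((g 0) ^ 2) ^ 2)) 0 :=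
    (HN.div HD (pow_ne_zero 2 (hgne 0))).const_mul _
  rw [H2.deriv]
  have e1 : g1 0 = 0 := h1
  have e2 : g2 0 = 0 := h2
  rw [e1, e2]
  have : g 0 ≠ 0 := hgne 0
  rw [show c (Fin.snoc x' 0) = g 0 from rfl,
    show pd (Fin.last m) (pd (Fin.last m) (pd (Fin.last m) c)) (Fin.snoc x' 0) = g3 0 from rfl]
  field_simp
  ring
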